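/- arXiv:2502.09633 — 2 statements merged into one kernel-verified Lean document; each statement's English description precedes it below -/
import Mathlib

section
/- Define the infinite lower-triangular matrix M by M_{m,n} = 2·(-1)^{m+1}·C(2n-1, m)·C(2m+1, 2n) for m, n ≥ 1, where C denotes binomial coefficients. Then for every m ≥ 1, ∑_{n=1}^{m} M_{m,n} · B_{2n} = 1, where B_{2n} is the 2n-th Bernoulli number. -/
/-!
Let `L : ℚ[X] → ℚ` be the linear functional `Xⁿ ↦ Bₙ`. Since `B'ₙ = (-1)ⁿ Bₙ = ∑ₖ C(n,k) Bₖ`,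
`L (p (X + 1)) = L (p (-X))` for every `p`, i.e. `L` is invariant under `x ↦ -1 - x`.
The primitive `F(x) = ∫₀ˣ tᵐ (1 + t)ᵐ dt` satisfies `F(-1 - x) = F(-1) - F(x)`, hence
`L F = F(-1) / 2`, and `F(-1) = (-1)^(m+1) m!² / (2m+1)!` is a Beta integral.
Reindexing by `2n = m + k + 1` (odd Bernoulli numbers beyond `B₁` vanish) turns the row sum of `M`
into `2 (-1)^(m+1) (2m+1)! / m!² · L F`.
-/

/-- The infinite lower-triangular matrix `M_{m,n} = 2·(-1)^(m+1)·C(2n-1,m)·C(2m+1,2n)`. -/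
def M (m n : ℕ) : ℚ :=
  2 * (-1)^(m+1) * (Nat.choose (2*n-1) m) * (Nat.choose (2*m+1) (2*n))

open Polynomial hiding bernoulli
open Finset Nat

noncomputable def bernoulliUmbral : ℚ[X] →ₗ[ℚ] ℚ :=
  lsum fun n => LinearMap.toSpanSingleton ℚ ℚ (bernoulli n)

theorem bernoulliUmbral_monomial (n : ℕ) (a : ℚ) :
    bernoulliUmbral (monomial n a) = a * bernoulli n := by
  simp [bernoulliUmbral]

theorem bernoulliUmbral_C_mul (a : ℚ) (p : ℚ[X]) :
    bernoulliUmbral (C a * p) = a * bernoulliUmbral p := by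
  rw [← smul_eq_C_mul, map_smul, smul_eq_mul]

theorem bernoulliUmbral_C (a : ℚ) : bernoulliUmbral (C a) = a := by
  simpa using bernoulliUmbral_monomial 0 a

theorem bernoulliUmbral_X_pow (n : ℕ) : bernoulliUmbral (X ^ n) = bernoulli n := by
  rw [← monomial_one_right_eq_X_pow, bernoulliUmbral_monomial, one_mul]

theorem bernoulliUmbral_X_add_one_pow (n : ℕ) : bernoulliUmbral ((X + 1) ^ n) = bernoulli' n := by
  rw [← Polynomial.bernoulli_eval_one, Polynomial.bernoulli_def, add_pow, map_sum, eval_finsetSum,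
    ← sum_range_reflect]
  refine sum_congr rfl fun k hk => ?_
  rw [one_pow, mul_one, ← Nat.cast_comm, ← C_eq_natCast, bernoulliUmbral_C_mul,
    bernoulliUmbral_X_pow, eval_monomial, one_pow, mul_one]
  have hkn : k ≤ n := Nat.lt_succ_iff.mp (mem_range.mp hk)
  rw [Nat.add_sub_cancel, Nat.choose_symm hkn, mul_comm]

theorem bernoulliUmbral_neg_X_pow (n : ℕ) : bernoulliUmbral ((-X) ^ n) = bernoulli' n := by
  rw [neg_pow, ← C_1, ← C_neg, ← C_pow, bernoulliUmbral_C_mul, bernoulliUmbral_X_pow, bernoulli,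
    ← mul_assoc, ← pow_add, ← two_mul, pow_mul, neg_one_sq, one_pow, one_mul]

theorem bernoulliUmbral_comp_X_add_one (p : ℚ[X]) :
    bernoulliUmbral (p.comp (X + 1)) = bernoulliUmbral (p.comp (-X)) := by
  induction p using Polynomial.induction_on' with
  | add p q hp hq => rw [add_comp, add_comp, map_add, map_add, hp, hq]
  | monomial n a =>
    rw [monomial_comp, monomial_comp, bernoulliUmbral_C_mul, bernoulliUmbral_C_mul,
      bernoulliUmbral_X_add_one_pow, bernoulliUmbral_neg_X_pow]

theorem bernoulliUmbral_eq_half_eval_neg_one {p : ℚ[X]}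
    (hsymm : (derivative p).comp (-X - 1) = derivative p) (h0 : p.eval 0 = 0) :
    bernoulliUmbral p = p.eval (-1) / 2 := by
  have hreflect : p.comp (-X - 1) + p = C (p.eval (-1)) := by
    have hd : derivative (p.comp (-X - 1) + p) = 0 := by
      rw [derivative_add, derivative_comp, hsymm]
      simp
    rw [eq_C_of_derivative_eq_zero hd, coeff_zero_eq_eval_zero]
    simp [h0]
  have hinv : bernoulliUmbral (p.comp (-X - 1)) = bernoulliUmbral p := by
    have h := bernoulliUmbral_comp_X_add_one (p.comp (X - 1))
    simp only [comp_assoc, sub_comp, X_comp, one_comp, add_sub_cancel_right, comp_X] at h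
    exact h.symm
  have := congrArg bernoulliUmbral hreflect
  rw [map_add, hinv, bernoulliUmbral_C] at this
  linarith

theorem sum_range_choose_mul_neg_one_pow_div (n a : ℕ) :
    ∑ k ∈ range (n + 1), (n.choose k : ℚ) * ((-1) ^ k / (a + k + 1)) =
      n ! * a ! / (n + a + 1)! := by
  induction n generalizing a with
  | zero =>
    rw [sum_range_one, zero_add, Nat.factorial_succ, Nat.choose_self, Nat.factorial_zero]
    push_cast
    field_simp
    ring
  | succ n ih =>
    have hshift : ∑ k ∈ range (n + 1), (n.choose k : ℚ) * ((-1) ^ (k + 1) / (a + ↑(k + 1) + 1)) =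
        -(n ! * (a + 1)! / (n + (a + 1) + 1)!) := by
      rw [← ih (a + 1), ← sum_neg_distrib]
      refine sum_congr rfl fun k _ => ?_
      push_cast
      ring
    rw [sum_choose_succ_mul (fun i _ => (-1 : ℚ) ^ i / (a + i + 1)), ih a, hshift,
      show n + (a + 1) + 1 = n + a + 1 + 1 by ring, show n + 1 + a + 1 = n + a + 1 + 1 by ring]
    push_cast [Nat.factorial_succ]
    field_simp
    ring

-- `∫₀ˣ tᵐ (1 + t)ᵐ dt`
noncomputable def betaPrimitive (m : ℕ) : ℚ[X] :=
  ∑ k ∈ range (m + 1), monomial (m + k + 1) ((m.choose k : ℚ) / (m + k + 1))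

theorem derivative_betaPrimitive (m : ℕ) :
    derivative (betaPrimitive m) = X ^ m * (X + 1) ^ m := by
  rw [betaPrimitive, derivative_sum, add_pow, mul_sum]
  refine sum_congr rfl fun k _ => ?_
  rw [derivative_monomial, ← C_mul_X_pow_eq_monomial, one_pow, mul_one, Nat.add_sub_cancel,
    pow_add]
  have : (m + k + 1 : ℚ) ≠ 0 := by positivity
  push_cast
  rw [div_mul_cancel₀ _ this]
  simp only [map_natCast]
  ring

theorem derivative_betaPrimitive_comp_neg_X_sub_one (m : ℕ) :
    (derivative (betaPrimitive m)).comp (-X - 1) = derivative (betaPrimitive m) := by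
  rw [derivative_betaPrimitive, mul_comp, pow_comp, pow_comp, add_comp, X_comp, one_comp,
    ← mul_pow, ← mul_pow]
  congr 1
  ring

theorem eval_zero_betaPrimitive (m : ℕ) : (betaPrimitive m).eval 0 = 0 := by
  simp [betaPrimitive, eval_finsetSum]

theorem eval_neg_one_betaPrimitive (m : ℕ) :
    (betaPrimitive m).eval (-1) = (-1) ^ (m + 1) * (m ! * m ! / (2 * m + 1)!) := by
  rw [two_mul, ← sum_range_choose_mul_neg_one_pow_div, mul_sum, betaPrimitive, eval_finsetSum]
  refine sum_congr rfl fun k _ => ?_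
  rw [eval_monomial]
  ring

theorem sum_choose_div_mul_bernoulli (m : ℕ) :
    ∑ k ∈ range (m + 1), (m.choose k : ℚ) / (m + k + 1) * bernoulli (m + k + 1) =
      (-1) ^ (m + 1) * (m ! * m ! / (2 * m + 1)!) / 2 := by
  rw [← eval_neg_one_betaPrimitive, ← bernoulliUmbral_eq_half_eval_neg_one
    (derivative_betaPrimitive_comp_neg_X_sub_one m) (eval_zero_betaPrimitive m), betaPrimitive,
    map_sum]
  exact sum_congr rfl fun k _ => (bernoulliUmbral_monomial _ _).symm

theorem choose_add_mul_choose_eq (m k : ℕ) (hk : k ≤ m) :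
    ((m + k).choose m * (2 * m + 1).choose (m + k + 1) : ℚ) =
      (2 * m + 1)! / (m ! * m !) * (m.choose k / (m + k + 1)) := by
  obtain ⟨j, rfl⟩ := Nat.exists_eq_add_of_le hk
  rw [show 2 * (k + j) + 1 = (k + j + k + 1) + j by ring, Nat.cast_add_choose,
    Nat.cast_add_choose, Nat.cast_add_choose]
  push_cast [Nat.factorial_succ]
  field_simp

theorem sum_Icc_choose_two_mul_sub_one_eq (m : ℕ) (hm : 1 ≤ m) (c : ℕ → ℚ)
    (hc : ∀ j, Odd j → 1 < j → c j = 0) :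
    ∑ n ∈ Icc 1 m, ((2 * n - 1).choose m : ℚ) * c (2 * n) =
      ∑ k ∈ range (m + 1), ((m + k).choose m : ℚ) * c (m + k + 1) := by
  have hle {a b : ℕ} {x : ℚ} (h : (a.choose b : ℚ) * x ≠ 0) : b ≤ a := by
    by_contra hlt
    exact h (by rw [Nat.choose_eq_zero_of_lt (not_le.mp hlt), Nat.cast_zero, zero_mul])
  refine sum_bij_ne_zero (fun n _ _ => 2 * n - 1 - m) ?_ ?_ ?_ ?_
  · intro n hn _
    simp only [mem_Icc, mem_range] at hn ⊢
    omega
  · intro n₁ hn₁ h₁ n₂ hn₂ h₂ h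
    have := hle h₁
    have := hle h₂
    simp only [mem_Icc] at hn₁ hn₂
    omega
  · intro k hk h
    have heven : Even (m + k + 1) := by
      by_contra hodd
      exact right_ne_zero_of_mul h (hc _ (Nat.not_even_iff_odd.mp hodd) (by omega))
    obtain ⟨n, hn⟩ := heven
    simp only [mem_range] at hk
    refine ⟨n, mem_Icc.mpr ⟨by omega, by omega⟩, ?_, by omega⟩
    rwa [show 2 * n - 1 = m + k by omega, show 2 * n = m + k + 1 by omega]
  · intro n hn h
    have := hle h
    simp only [mem_Icc] at hn
    rw [show m + (2 * n - 1 - m) = 2 * n - 1 by omega, show 2 * n - 1 + 1 = 2 * n by omega]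

theorem matrix_bernoulli_identity (m : ℕ) (hm : 1 ≤ m) :
    ∑ n ∈ Finset.Icc 1 m, M m n * bernoulli (2*n) = 1 := by
  have hodd (j : ℕ) (hj : Odd j) (h1 : 1 < j) :
      ((2 * m + 1).choose j : ℚ) * bernoulli j = 0 := by
    rw [bernoulli_eq_zero_of_odd hj h1, mul_zero]
  calc ∑ n ∈ Icc 1 m, M m n * bernoulli (2 * n)
      = 2 * (-1) ^ (m + 1) * ∑ n ∈ Icc 1 m,
          ((2 * n - 1).choose m : ℚ) * ((2 * m + 1).choose (2 * n) * bernoulli (2 * n)) := by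
        rw [mul_sum]
        exact sum_congr rfl fun n _ => by rw [M]; ring
    _ = 2 * (-1) ^ (m + 1) * ∑ k ∈ range (m + 1),
          ((m + k).choose m : ℚ) * ((2 * m + 1).choose (m + k + 1) * bernoulli (m + k + 1)) := by
        rw [sum_Icc_choose_two_mul_sub_one_eq m hm _ hodd]
    _ = 2 * (-1) ^ (m + 1) * ((2 * m + 1)! / (m ! * m !) *
          ∑ k ∈ range (m + 1), (m.choose k : ℚ) / (m + k + 1) * bernoulli (m + k + 1)) := by
        congr 1
        rw [mul_sum]
        refine sum_congr rfl fun k hk => ?_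
        rw [← mul_assoc, choose_add_mul_choose_eq m k (Nat.lt_succ_iff.mp (mem_range.mp hk))]
        ring
    _ = 1 := by
        rw [sum_choose_div_mul_bernoulli]
        field_simp
        simp [← pow_mul]
end

section
/- For n ≥ 2, p_n(π²) = (π/√2)·(n!/(2n+1)!)·(2π)^n·J_{n-1/2}(π), where p_n is given by p_n(x) = (1/(4n²-1))·∑_{k=0}^{⌊n/2⌋-1} ((-4)^k x^{k+1}/(2k+1)!)·((n-2)! (2n-3-2k)!)/((n-2-2k)! (2n-3)!) and J_ν is the Bessel function of the first kind. -/
open Real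

/-- The Bessel function of the first kind `J_ν(z)` (for `z > 0`), defined by its power series
`J_ν(z) = ∑_{m=0}^∞ (-1)^m / (m! Γ(m+ν+1)) (z/2)^(2m+ν)`. -/
noncomputable def besselJ (ν : ℝ) (z : ℝ) : ℝ :=
  ∑' m : ℕ, (-1 : ℝ)^m / ((m.factorial : ℝ) * Real.Gamma ((m : ℝ) + ν + 1)) *
    (z/2) ^ ((2*(m : ℝ) + ν))

/-- The polynomials `p_n(x)` in closed form; the ratio of Gamma functions is written via
falling factorials (vanishing when `n-2 < 2k`). -/
noncomputable def p (n : ℕ) (x : ℝ) : ℝ :=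
  (1 / (4*(n : ℝ)^2 - 1)) *
    ∑ k ∈ Finset.range (n / 2),
      ((-4 : ℝ)^k * x^(k+1) / ((2*k+1).factorial : ℝ)) *
        ((Nat.descFactorial (n-2) (2*k) : ℝ) / (Nat.descFactorial (2*n-3) (2*k) : ℝ))

/-!
Both sides satisfy the same three-term recurrence in `n`. Writing `Γ(m + n + 1/2)` through
factorials turns `√(πz/2) J_{n-1/2}(z)` into `(2z)^n S_n(z)` for an entire power series
`S_n = besselSeries n` with `(2n+1) S_{n+1} = 2z² S_{n+2} + S_n / 2`, `S_0 = cos z` and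
`2z S_1 = sin z`. Hence `f_n = n!/(2n+1)! (2z)^{2n} S_n(z)` satisfies
`f_{n+2} = (2n+1)/(2n+5) f_{n+1} - z²/((2n+3)(2n+5)) f_n`, and comparing coefficients shows the
same recurrence for `p_n(z²)`. At `z = π` the initial values at `n = 1, 2` agree because
`sin π = 0` and `cos π = -1`.
-/

open Nat

theorem Real.Gamma_nat_add_half_eq_factorial (k : ℕ) :
    Gamma (k + 1 / 2) = √π * (2 * k)! / (4 ^ k * k !) := by
  rw [Real.Gamma_nat_add_half]
  cases k with
  | zero => simp
  | succ k =>
    have h : (2 * (k + 1))! = (2 * (k + 1) - 1)‼ * (2 ^ (k + 1) * (k + 1)!) := by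
      rw [← doubleFactorial_two_mul, show 2 * (k + 1) - 1 = 2 * k + 1 by omega,
        show 2 * (k + 1) = 2 * k + 1 + 1 by ring, factorial_eq_mul_doubleFactorial, mul_comm]
    rw [h, show (4 : ℝ) ^ (k + 1) = 2 ^ (k + 1) * 2 ^ (k + 1) by rw [← mul_pow]; norm_num]
    push_cast
    field_simp

theorem eq_of_two_step_recurrence {R : Type*} [Semiring R] {f g : ℕ → R} (a b : ℕ → R) (n₀ : ℕ)
    (hf : ∀ n ≥ n₀, f (n + 2) = a n * f (n + 1) + b n * f n)
    (hg : ∀ n ≥ n₀, g (n + 2) = a n * g (n + 1) + b n * g n)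
    (h₀ : f n₀ = g n₀) (h₁ : f (n₀ + 1) = g (n₀ + 1)) {n : ℕ} (hn : n₀ ≤ n) : f n = g n := by
  suffices ∀ k, f (n₀ + k) = g (n₀ + k) ∧ f (n₀ + k + 1) = g (n₀ + k + 1) by
    obtain ⟨k, rfl⟩ := exists_add_of_le hn
    exact (this k).1
  intro k
  induction k with
  | zero => exact ⟨h₀, h₁⟩
  | succ k ih =>
    refine ⟨ih.2, ?_⟩
    rw [← add_assoc, add_assoc _ 1 1, hf _ (by omega), hg _ (by omega), ih.1, ih.2]

noncomputable def besselSeriesTerm (n : ℕ) (z : ℝ) (m : ℕ) : ℝ :=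
  (-1) ^ m * (m + n)! / (m ! * (2 * m + 2 * n)!) * z ^ (2 * m)

noncomputable def besselSeries (n : ℕ) (z : ℝ) : ℝ :=
  ∑' m, besselSeriesTerm n z m

theorem besselSeries_zero (z : ℝ) : besselSeries 0 z = cos z := by
  rw [Real.cos_eq_tsum, besselSeries]
  refine tsum_congr fun m => ?_
  rw [besselSeriesTerm, add_zero, mul_zero, add_zero]
  field_simp

theorem two_mul_mul_besselSeries_one (z : ℝ) : 2 * z * besselSeries 1 z = sin z := by
  rw [Real.sin_eq_tsum, besselSeries, ← tsum_mul_left]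
  refine tsum_congr fun m => ?_
  push_cast [besselSeriesTerm, show 2 * m + 2 * 1 = 2 * m + 1 + 1 by ring, factorial_succ,
    pow_succ]
  field_simp
  ring

theorem summable_besselSeriesTerm (n : ℕ) (z : ℝ) : Summable (besselSeriesTerm n z) := by
  refine .of_norm_bounded (Real.summable_pow_div_factorial (z ^ 2)) fun m => ?_
  have hfac : ((m + n)! : ℝ) ≤ (2 * m + 2 * n)! := by
    exact_mod_cast Nat.factorial_le (by omega)
  rw [besselSeriesTerm, norm_mul, norm_div, norm_mul, norm_pow, norm_neg, norm_one, one_pow,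
    one_mul, pow_mul, Real.norm_of_nonneg (by positivity), Real.norm_of_nonneg (by positivity),
    Real.norm_of_nonneg (by positivity), div_mul_eq_mul_div,
    div_le_div_iff₀ (by positivity) (by positivity)]
  calc (m + n)! * (z ^ 2) ^ m * m ! ≤ (2 * m + 2 * n)! * (z ^ 2) ^ m * m ! := by gcongr
    _ = _ := by ring

theorem besselSeries_recurrence (n : ℕ) (z : ℝ) :
    (2 * n + 1) * besselSeries (n + 1) z = 2 * z ^ 2 * besselSeries (n + 2) z
      + besselSeries n z / 2 := by
  have hterm (m : ℕ) : (2 * n + 1) * besselSeriesTerm (n + 1) z (m + 1)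
      - besselSeriesTerm n z (m + 1) / 2 = 2 * z ^ 2 * besselSeriesTerm (n + 2) z m := by
    push_cast [besselSeriesTerm, show m + 1 + (n + 1) = m + n + 2 by ring,
      show m + 1 + n = m + n + 1 by ring, show m + (n + 2) = m + n + 2 by ring,
      show 2 * (m + 1) + 2 * (n + 1) = 2 * m + 2 * n + 4 by ring,
      show 2 * m + 2 * (n + 2) = 2 * m + 2 * n + 4 by ring,
      show 2 * (m + 1) + 2 * n = 2 * m + 2 * n + 2 by ring, factorial_succ, pow_succ]
    field_simp
    ring
  have h0 : (2 * n + 1) * besselSeriesTerm (n + 1) z 0 - besselSeriesTerm n z 0 / 2 = 0 := by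
    push_cast [besselSeriesTerm, show 2 * 0 + 2 * (n + 1) = 2 * n + 2 by ring, zero_add,
      factorial_succ]
    field_simp
    ring
  have hs₁ := (summable_besselSeriesTerm (n + 1) z).mul_left (2 * n + 1 : ℝ)
  have hs₂ := (summable_besselSeriesTerm n z).div_const 2
  rw [← sub_eq_iff_eq_add, besselSeries, besselSeries, besselSeries, ← tsum_mul_left,
    ← tsum_mul_left, ← tsum_div_const, ← hs₁.tsum_sub hs₂, (hs₁.sub hs₂).tsum_eq_zero_add, h0,
    zero_add]
  exact tsum_congr hterm

theorem sqrt_mul_besselJ_nat_sub_half (n : ℕ) {z : ℝ} (hz : 0 < z) :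
    √(π * z / 2) * besselJ (n - 1 / 2) z = (2 * z) ^ n * besselSeries n z := by
  rw [besselJ, besselSeries, ← tsum_mul_left, ← tsum_mul_left]
  refine tsum_congr fun m => ?_
  have hΓ : Gamma (m + (n - 1 / 2) + 1) = √π * (2 * m + 2 * n)! / (4 ^ (m + n) * (m + n)!) := by
    rw [← mul_add, ← Real.Gamma_nat_add_half_eq_factorial]
    push_cast
    ring_nf
  have hpow : (z / 2) ^ (2 * (m : ℝ) + (n - 1 / 2)) = (z / 2) ^ (2 * m + n) / √(z / 2) := by
    rw [show 2 * (m : ℝ) + (n - 1 / 2) = ((2 * m + n : ℕ) : ℝ) - 1 / 2 by push_cast; ring,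
      rpow_sub (by positivity), rpow_natCast, sqrt_eq_rpow]
  rw [besselSeriesTerm, hΓ, hpow, mul_div_assoc, sqrt_mul pi_nonneg, div_pow,
    show (4 : ℝ) ^ (m + n) = 2 ^ (2 * m + n) * 2 ^ n by
      rw [← pow_add, show 2 * m + n + n = 2 * (m + n) by ring, pow_mul]; norm_num]
  have hsqrt : 0 < √(z / 2) := by positivity
  field_simp
  ring

noncomputable def scaledBesselSeries (z : ℝ) (n : ℕ) : ℝ :=
  n ! / (2 * n + 1)! * (2 * z) ^ (2 * n) * besselSeries n z

theorem scaledBesselSeries_add_two (z : ℝ) (n : ℕ) :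
    scaledBesselSeries z (n + 2) = (2 * n + 1) / (2 * n + 5) * scaledBesselSeries z (n + 1)
      - z ^ 2 / ((2 * n + 3) * (2 * n + 5)) * scaledBesselSeries z n := by
  have h := besselSeries_recurrence n z
  simp only [scaledBesselSeries]
  push_cast [show 2 * (n + 2) + 1 = 2 * n + 1 + 1 + 1 + 1 + 1 by ring,
    show 2 * (n + 1) + 1 = 2 * n + 1 + 1 + 1 by ring, factorial_succ, mul_add, pow_add]
  field_simp
  linear_combination
    (-8 * z ^ 2 * (2 * z) ^ (2 * n) * (n + 1) * (n + 2) * (2 * n + 3) * (2 * n + 5)) * h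

noncomputable def pCoeff (N k : ℕ) : ℝ :=
  (-4) ^ k / (2 * k + 1)! * (N.descFactorial (2 * k) / (2 * N + 1).descFactorial (2 * k))
    / ((2 * N + 3) * (2 * N + 5))

theorem pCoeff_add_two_succ (m k : ℕ) :
    pCoeff (m + 2) (k + 1) = (2 * m + 5) / (2 * m + 9) * pCoeff (m + 1) (k + 1)
      - pCoeff m k / ((2 * m + 7) * (2 * m + 9)) := by
  by_cases hk : m < 2 * k
  · have hzero {a b : ℕ} (h : a < b) : (a.descFactorial b : ℝ) = 0 := by
      rw [descFactorial_eq_zero_iff_lt.2 h, cast_zero]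
    simp [pCoeff, hzero hk, hzero (by omega : m + 2 < 2 * (k + 1)),
      hzero (by omega : m + 1 < 2 * (k + 1))]
  rw [not_lt] at hk
  have hd₂ : (m + 2).descFactorial (2 * (k + 1))
      = (m + 2) * ((m + 1) * m.descFactorial (2 * k)) := by
    rw [mul_add, mul_one, succ_descFactorial_succ, succ_descFactorial_succ]
  have hd₁ : (m + 1).descFactorial (2 * (k + 1))
      = (m + 1) * ((m - 2 * k) * m.descFactorial (2 * k)) := by
    rw [mul_add, mul_one, succ_descFactorial_succ, descFactorial_succ]
  have he₂ : (2 * (m + 2) + 1).descFactorial (2 * (k + 1))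
      = (2 * m + 5) * ((2 * m + 4) * (2 * m + 3).descFactorial (2 * k)) := by
    rw [show 2 * (m + 2) + 1 = 2 * m + 3 + 1 + 1 by ring, mul_add, mul_one,
      succ_descFactorial_succ, succ_descFactorial_succ]
  have he₁ : (2 * (m + 1) + 1).descFactorial (2 * (k + 1))
      = (2 * m + 3) * ((2 * m + 2) * (2 * m + 1).descFactorial (2 * k)) := by
    rw [show 2 * (m + 1) + 1 = 2 * m + 1 + 1 + 1 by ring, mul_add, mul_one,
      succ_descFactorial_succ, succ_descFactorial_succ]
  have he₁' : (2 * (m + 1) + 1).descFactorial (2 * (k + 1))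
      = (2 * m + 2 - 2 * k) * ((2 * m + 3 - 2 * k) * (2 * m + 3).descFactorial (2 * k)) := by
    rw [show 2 * (m + 1) + 1 = 2 * m + 3 by ring, mul_add, mul_one, descFactorial_succ,
      descFactorial_succ, show 2 * m + 3 - (2 * k + 1) = 2 * m + 2 - 2 * k by omega]
  have he : ((2 * m + 1).descFactorial (2 * k) : ℝ) = (2 * m + 2 - 2 * k) * (2 * m + 3 - 2 * k)
      * (2 * m + 3).descFactorial (2 * k) / ((2 * m + 3) * (2 * m + 2)) := by
    have := congrArg (fun t : ℕ => (t : ℝ)) (he₁.symm.trans he₁')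
    rw [eq_div_iff (by positivity)]
    push_cast [show 2 * k ≤ 2 * m + 2 by omega, show 2 * k ≤ 2 * m + 3 by omega] at this
    linarith
  have hpos : ((2 * m + 3).descFactorial (2 * k) : ℝ) ≠ 0 := by
    exact_mod_cast (descFactorial_pos.2 (by omega)).ne'
  have hk' : (2 * k : ℝ) ≤ m := by exact_mod_cast hk
  have h₂ : (m + 1 - k : ℝ) ≠ 0 := by linarith
  have h₃ : (2 * m + 3 - 2 * k : ℝ) ≠ 0 := by linarith
  unfold pCoeff
  rw [hd₂, hd₁, he₂, he₁]
  push_cast [hk, show 2 * (k + 1) + 1 = 2 * k + 1 + 1 + 1 by ring, factorial_succ]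
  rw [he]
  field_simp
  ring

theorem p_add_two_eq_sum (N K : ℕ) (hK : N / 2 < K) (x : ℝ) :
    p (N + 2) x = ∑ k ∈ Finset.range K, pCoeff N k * x ^ (k + 1) := by
  have hterm (k : ℕ) : 1 / (4 * ((N + 2 : ℕ) : ℝ) ^ 2 - 1)
      * ((-4) ^ k * x ^ (k + 1) / (2 * k + 1)!
        * ((N + 2 - 2).descFactorial (2 * k) / (2 * (N + 2) - 3).descFactorial (2 * k)))
      = pCoeff N k * x ^ (k + 1) := by
    rw [pCoeff, show N + 2 - 2 = N by omega, show 2 * (N + 2) - 3 = 2 * N + 1 by omega,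
      show 4 * ((N + 2 : ℕ) : ℝ) ^ 2 - 1 = (2 * N + 3) * (2 * N + 5) by push_cast; ring]
    ring
  rw [p, Finset.mul_sum, Finset.sum_congr rfl fun k _ => hterm k]
  refine Finset.sum_subset (Finset.range_subset_range.2 (by omega)) fun k _ hk => ?_
  rw [Finset.mem_range, not_lt] at hk
  rw [pCoeff, descFactorial_eq_zero_iff_lt.2 (by omega)]
  simp

theorem p_add_two (n : ℕ) (hn : 1 ≤ n) (x : ℝ) :
    p (n + 2) x
      = (2 * n + 1) / (2 * n + 5) * p (n + 1) x - x / ((2 * n + 3) * (2 * n + 5)) * p n x := by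
  obtain _ | _ | m := n
  · omega
  · norm_num [p]
    ring
  have hzero : pCoeff (m + 2) 0 = (2 * m + 5) / (2 * m + 9) * pCoeff (m + 1) 0 := by
    simp only [pCoeff, mul_zero, descFactorial_zero]
    push_cast
    field_simp
    ring
  rw [p_add_two_eq_sum (m + 2) (m + 3) (by omega), show m + 2 + 1 = m + 1 + 2 by ring,
    p_add_two_eq_sum (m + 1) (m + 3) (by omega), p_add_two_eq_sum m (m + 2) (by omega),
    Finset.sum_range_succ' (fun k => pCoeff (m + 2) k * x ^ (k + 1)),
    Finset.sum_range_succ' (fun k => pCoeff (m + 1) k * x ^ (k + 1)), mul_add, Finset.mul_sum,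
    Finset.mul_sum, add_sub_right_comm, ← Finset.sum_sub_distrib, hzero]
  congr 1
  · refine Finset.sum_congr rfl fun k _ => ?_
    rw [pCoeff_add_two_succ]
    push_cast
    ring
  · push_cast
    ring

theorem p_pi_sq_eq_scaledBesselSeries {n : ℕ} (hn : 1 ≤ n) :
    p n (π ^ 2) = scaledBesselSeries π n := by
  have hS₁ : besselSeries 1 π = 0 := by
    have := two_mul_mul_besselSeries_one π
    rw [sin_pi] at this
    simpa [pi_ne_zero] using this
  have hS₂ : besselSeries 2 π = 1 / (4 * π ^ 2) := by
    have := besselSeries_recurrence 0 π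
    rw [besselSeries_zero, cos_pi, hS₁] at this
    field_simp
    linarith
  refine eq_of_two_step_recurrence (f := fun k => p k (π ^ 2)) (g := scaledBesselSeries π)
    (fun k => (2 * k + 1) / (2 * k + 5)) (fun k => -(π ^ 2 / ((2 * k + 3) * (2 * k + 5)))) 1
    (fun k hk => ?_) (fun k _ => ?_) ?_ ?_ hn
  · rw [p_add_two k hk]
    ring
  · rw [scaledBesselSeries_add_two]
    ring
  · simp [p, scaledBesselSeries, hS₁]
  · norm_num [p, scaledBesselSeries, hS₂]
    field_simp
    norm_num

theorem p_eq_besselJ (n : ℕ) (hn : 2 ≤ n) :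
    p n (π^2) = (π / Real.sqrt 2) * ((n.factorial : ℝ) / ((2*n+1).factorial : ℝ))
      * (2*π)^n * besselJ ((n : ℝ) - 1/2) π := by
  have hJ := sqrt_mul_besselJ_nat_sub_half n pi_pos
  rw [sqrt_div' _ zero_le_two, sqrt_mul_self pi_nonneg] at hJ
  rw [p_pi_sq_eq_scaledBesselSeries (by omega), scaledBesselSeries, pow_mul', sq]
  linear_combination (-n ! / (2 * n + 1)! * (2 * π) ^ n) * hJ
end
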